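/- Let A be a unital ring and c \in A a central element such that A is c-adically complete, i.e. the canonical ring homomorphism A \to \varprojlim_n A/c^n A is bijective, and such that the associated graded ring gr(A) = \bigoplus_{n\ge 0} c^n A/c^{n+1} A is left noetherian. Suppose given for each n \ge 1 a left A-module M_n with c^n M_n = 0, and A-module homomorphisms \varphi_n : M_{n+1} \to M_n inducing isomorphisms M_{n+1}/c^n M_{n+1} \cong M_n, such that M_1 is finitely generated over A/cA. Then M := \varprojlim_n M_n is a finitely generated left A-module, and for every n \ge 1 the canonical map M/c^n M \to M_n is an isomorphism. -/
import Mathlib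


open DirectSum

section

variable {A : Type*} [Ring A]

/-- A central element of a ring. -/
structure CentralElement (A : Type*) [Ring A] where
  c : A
  central : ∀ a : A, c * a = a * c

namespace CentralElement

variable (z : CentralElement A)

theorem commute_pow (a : A) (n : ℕ) : z.c ^ n * a = a * z.c ^ n :=
  (Commute.pow_left (z.central a) n).eq

/-- The additive subgroup `cⁿA` of a ring `A` (`c` central). -/
def cPow (n : ℕ) : AddSubgroup A where
  carrier := {x | ∃ a : A, x = z.c ^ n * a}
  add_mem' := by
    rintro x y ⟨a, rfl⟩ ⟨b, rfl⟩
    exact ⟨a + b, by rw [mul_add]⟩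
  zero_mem' := ⟨0, by rw [mul_zero]⟩
  neg_mem' := by
    rintro x ⟨a, rfl⟩
    exact ⟨-a, by rw [mul_neg]⟩

theorem cPow_mul_mem {m n : ℕ} {x y : A} (hx : x ∈ z.cPow m) (hy : y ∈ z.cPow n) :
    x * y ∈ z.cPow (m + n) := by
  obtain ⟨a, rfl⟩ := hx
  obtain ⟨b, rfl⟩ := hy
  refine ⟨a * b, ?_⟩
  rw [pow_add, mul_assoc, ← mul_assoc a, ← z.commute_pow a n, mul_assoc, mul_assoc]

instance : SetLike.GradedMonoid z.cPow where
  one_mem := ⟨1, by rw [pow_zero, one_mul]⟩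
  mul_mem _ _ _ _ := z.cPow_mul_mem

/-- The graded ring `⨁ₙ cⁿA` attached to the `c`-adic filtration of `A`. -/
abbrev CAdicRees := ⨁ n, z.cPow n

theorem mem_succ_of_right {u v : z.CAdicRees}
    (hv : ∀ n, (v n : A) ∈ z.cPow (n + 1)) (n : ℕ) :
    ((u * v) n : A) ∈ z.cPow (n + 1) := by
  classical
  rw [DirectSum.coe_mul_apply]
  refine AddSubgroup.sum_mem _ ?_
  rintro ⟨i, j⟩ hij
  obtain ⟨-, hsum⟩ := Finset.mem_filter.mp hij
  have h : (u i : A) * (v j : A) ∈ z.cPow (i + (j + 1)) :=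
    z.cPow_mul_mem (u i).2 (hv j)
  have hidx : i + (j + 1) = n + 1 := by omega
  rwa [hidx] at h

theorem mem_succ_of_left {u v : z.CAdicRees}
    (hu : ∀ n, (u n : A) ∈ z.cPow (n + 1)) (n : ℕ) :
    ((u * v) n : A) ∈ z.cPow (n + 1) := by
  classical
  rw [DirectSum.coe_mul_apply]
  refine AddSubgroup.sum_mem _ ?_
  rintro ⟨i, j⟩ hij
  obtain ⟨-, hsum⟩ := Finset.mem_filter.mp hij
  have h : (u i : A) * (v j : A) ∈ z.cPow (i + 1 + j) :=
    z.cPow_mul_mem (hu i) (v j).2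
  have hidx : i + 1 + j = n + 1 := by omega
  rwa [hidx] at h

/-- The congruence relation on `⨁ₙ cⁿA` whose quotient is the associated graded ring
`gr(A) = ⨁ₙ cⁿA / cⁿ⁺¹A` of the `c`-adic filtration. -/
def grCon : RingCon z.CAdicRees where
  r x y := ∀ n, (x n : A) - (y n : A) ∈ z.cPow (n + 1)
  iseqv := by
    refine ⟨fun x n => by simpa using (z.cPow (n + 1)).zero_mem, ?_, ?_⟩
    · intro x y h n
      simpa using (z.cPow (n + 1)).neg_mem (h n)
    · intro x y w h1 h2 n
      simpa using (z.cPow (n + 1)).add_mem (h1 n) (h2 n)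
  add' := by
    intro a b a' b' h1 h2 n
    have := (z.cPow (n + 1)).add_mem (h1 n) (h2 n)
    rw [DirectSum.add_apply, DirectSum.add_apply, AddSubgroup.coe_add, AddSubgroup.coe_add]
    convert this using 1
    abel
  mul' := by
    intro a b a' b' h1 h2 n
    have key : a * a' - b * b' = a * (a' - b') + (a - b) * b' := by noncomm_ring
    have m1 : ((a * (a' - b')) n : A) ∈ z.cPow (n + 1) :=
      z.mem_succ_of_right (fun m => by
        rw [DirectSum.sub_apply, AddSubgroup.coe_sub]; exact h2 m) n
    have m2 : (((a - b) * b') n : A) ∈ z.cPow (n + 1) :=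
      z.mem_succ_of_left (fun m => by
        rw [DirectSum.sub_apply, AddSubgroup.coe_sub]; exact h1 m) n
    have : ((a * a' - b * b') n : A) ∈ z.cPow (n + 1) := by
      rw [key, DirectSum.add_apply, AddSubgroup.coe_add]
      exact (z.cPow (n + 1)).add_mem m1 m2
    rwa [DirectSum.sub_apply, AddSubgroup.coe_sub] at this

/-- The associated graded ring `gr(A) = ⨁ₙ cⁿA / cⁿ⁺¹A` of the `c`-adic filtration of
`A`, realized as the quotient of the graded ring `⨁ₙ cⁿA` by the homogeneous two-sided
ideal `⨁ₙ cⁿ⁺¹A`. -/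
abbrev CAdicGraded := z.grCon.Quotient


/-- The congruence relation `a ~ b ↔ a - b ∈ cⁿA`; its quotient ring is `A/cⁿA`. -/
def adicCon (n : ℕ) : RingCon A where
  r a b := ∃ x : A, a - b = z.c ^ n * x
  iseqv := by
    refine ⟨fun a => ⟨0, by simp⟩, ?_, ?_⟩
    · rintro a b ⟨x, hx⟩
      exact ⟨-x, by rw [mul_neg, ← hx]; abel⟩
    · rintro a b d ⟨x, hx⟩ ⟨y, hy⟩
      exact ⟨x + y, by rw [mul_add, ← hx, ← hy]; abel⟩
  add' := by
    rintro a b a' b' ⟨x, hx⟩ ⟨y, hy⟩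
    exact ⟨x + y, by rw [mul_add, ← hx, ← hy]; abel⟩
  mul' := by
    rintro a b a' b' ⟨x, hx⟩ ⟨y, hy⟩
    refine ⟨a * y + x * b', ?_⟩
    calc a * a' - b * b' = a * (a' - b') + (a - b) * b' := by noncomm_ring
      _ = a * (z.c ^ n * y) + z.c ^ n * x * b' := by rw [hx, hy]
      _ = z.c ^ n * (a * y) + z.c ^ n * (x * b') := by
          rw [← mul_assoc, ← z.commute_pow a n, mul_assoc, mul_assoc]
      _ = z.c ^ n * (a * y + x * b') := by rw [mul_add]

/-- The transition map `A/cⁿ⁺¹A → A/cⁿA` of the inverse system. -/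
def adicTransition (n : ℕ) : (z.adicCon (n + 1)).Quotient → (z.adicCon n).Quotient :=
  Quotient.map' id (by
    rintro a b ⟨x, hx⟩
    exact ⟨z.c * x, by show a - b = _; rw [hx, pow_succ, mul_assoc]⟩)

/-- The inverse limit `lim_n A/cⁿA`, realized as the set of sequences compatible with
the transition maps. -/
def AdicLim : Type _ :=
  { f : ∀ n : ℕ, (z.adicCon n).Quotient // ∀ n : ℕ, z.adicTransition n (f (n + 1)) = f n }

/-- The canonical map `A → lim_n A/cⁿA` (the underlying function of the canonical ring
homomorphism). -/
def toAdicLim (a : A) : z.AdicLim :=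
  ⟨fun n => (z.adicCon n).mk' a, fun _ => rfl⟩

section Modules

variable (M : Type*) [AddCommGroup M] [Module A M]

/-- The submodule `cⁿM` of a left `A`-module `M` (`c` central in `A`). -/
def cPowSMul (n : ℕ) : Submodule A M where
  carrier := {x | ∃ m : M, x = z.c ^ n • m}
  add_mem' := by
    rintro x y ⟨m, rfl⟩ ⟨m', rfl⟩
    exact ⟨m + m', by rw [smul_add]⟩
  zero_mem' := ⟨0, by rw [smul_zero]⟩
  smul_mem' := by
    rintro a x ⟨m, rfl⟩
    exact ⟨a • m, by rw [smul_smul, smul_smul, z.commute_pow a n]⟩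

theorem cPowSMul_antitone (n : ℕ) : z.cPowSMul M (n + 1) ≤ z.cPowSMul M n := by
  rintro x ⟨m, rfl⟩
  exact ⟨z.c • m, by rw [pow_succ, mul_smul]⟩

/-- The transition map `M/cⁿ⁺¹M → M/cⁿM` of the inverse system. -/
def modTransition (n : ℕ) : (M ⧸ z.cPowSMul M (n + 1)) →ₗ[A] M ⧸ z.cPowSMul M n :=
  Submodule.mapQ _ _ LinearMap.id (z.cPowSMul_antitone M n)

/-- The inverse limit `lim_n M/cⁿM`, realized as the set of sequences compatible with
the transition maps. -/
def ModuleAdicLim : Type _ :=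
  { f : ∀ n : ℕ, M ⧸ z.cPowSMul M n // ∀ n : ℕ, z.modTransition M n (f (n + 1)) = f n }

/-- The canonical map `M → lim_n M/cⁿM` (the underlying function of the canonical
`A`-module homomorphism). -/
def toModuleAdicLim (x : M) : z.ModuleAdicLim M :=
  ⟨fun n => Submodule.Quotient.mk x, fun n => by
    simp [modTransition, Submodule.mapQ_apply]⟩

end Modules

section InverseSystem

variable (M : ℕ → Type*) [∀ n, AddCommGroup (M n)] [∀ n, Module A (M n)]

/-- The inverse limit `lim_n M_n` of an inverse system of `A`-modules, as the submodule
of compatible sequences in `∀ n, M n`. -/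
def invLimit (φ : ∀ n, M (n + 1) →ₗ[A] M n) : Submodule A (∀ n, M n) where
  carrier := {g | ∀ n, φ n (g (n + 1)) = g n}
  add_mem' := by
    intro g h hg hh n
    simp [Pi.add_apply, map_add, hg n, hh n]
  zero_mem' := by
    intro n
    simp
  smul_mem' := by
    intro a g hg n
    simp [Pi.smul_apply, map_smul, hg n]

/-- The projection `lim_n M_n → M_n`. -/
def limProj (φ : ∀ n, M (n + 1) →ₗ[A] M n) (n : ℕ) : ↥(invLimit M φ) →ₗ[A] M n :=
  (LinearMap.proj n).comp (invLimit M φ).subtype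

/-- The canonical map `(lim M)/cⁿ⁺¹(lim M) → M n` induced by the projection. -/
def limLift (z : CentralElement A) (φ : ∀ n, M (n + 1) →ₗ[A] M n)
    (hkill : ∀ n, ∀ x : M n, z.c ^ (n + 1) • x = 0) (n : ℕ) :
    (↥(invLimit M φ) ⧸ z.cPowSMul (↥(invLimit M φ)) (n + 1)) →ₗ[A] M n :=
  Submodule.liftQ _ (limProj M φ n) (by
    rintro x ⟨g, rfl⟩
    have : limProj M φ n (z.c ^ (n + 1) • g) = z.c ^ (n + 1) • limProj M φ n g :=
      map_smul _ _ _
    simp only [LinearMap.mem_ker, this, hkill n])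

end InverseSystem

end CentralElement

open CentralElement

section AuxLemmas

variable {A : Type*} [Ring A]

namespace InvLimAux

open CentralElement

variable (z : CentralElement A)
variable (M : ℕ → Type) [∀ n, AddCommGroup (M n)] [∀ n, Module A (M n)]
variable (φ : ∀ n, M (n + 1) →ₗ[A] M n)

/-- coordinate compatibility -/
lemma coord_succ (g : ↥(invLimit M φ)) (n : ℕ) :
    φ n ((g : ∀ k, M k) (n + 1)) = (g : ∀ k, M k) n := g.2 n

/-- projections at level 0 are surjective -/
lemma proj_zero_surj (hsurj : ∀ n, Function.Surjective (φ n)) (y : M 0) :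
    ∃ g : ↥(invLimit M φ), (g : ∀ k, M k) 0 = y := by
  classical
  refine ⟨⟨fun m => Nat.rec y (fun k gk => (hsurj k gk).choose) m,
    fun n => (hsurj n _).choose_spec⟩, rfl⟩

variable {t : ℕ} (x : Fin t → ↥(invLimit M φ))

/-- generation with error in cM -/
lemma gen_one
    (hkill : ∀ n, ∀ v : M n, z.c ^ (n + 1) • v = 0)
    (hsurj : ∀ n, Function.Surjective (φ n))
    (hker : ∀ n, LinearMap.ker (φ n) = z.cPowSMul (M (n + 1)) (n + 1))
    (hx0 : ∀ y : M 0, ∃ a : Fin t → A, ∑ i, a i • ((x i : ∀ k, M k) 0) = y) :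
    ∀ m (y : M m), ∃ (a : Fin t → A) (w : M m),
      y = (∑ i, a i • ((x i : ∀ k, M k) m)) + z.c • w := by
  intro m
  induction m with
  | zero =>
    intro y
    obtain ⟨a, ha⟩ := hx0 y
    exact ⟨a, 0, by rw [smul_zero, add_zero, ha]⟩
  | succ m ih =>
    intro y
    obtain ⟨a, w, hw⟩ := ih (φ m y)
    obtain ⟨w', hw'⟩ := hsurj m w
    have hmem : y - (∑ i, a i • ((x i : ∀ k, M k) (m + 1))) - z.c • w' ∈
        LinearMap.ker (φ m) := by
      rw [LinearMap.mem_ker, map_sub, map_sub, map_smul, map_sum, hw']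
      have : ∀ i ∈ Finset.univ, φ m (a i • ((x i : ∀ k, M k) (m + 1)))
          = a i • ((x i : ∀ k, M k) m) := fun i _ => by rw [map_smul, coord_succ]
      rw [Finset.sum_congr rfl this, hw]
      abel
    rw [hker m] at hmem
    obtain ⟨u, hu⟩ := hmem
    refine ⟨a, w' + z.c ^ m • u, ?_⟩
    have : z.c • (z.c ^ m • u) = z.c ^ (m + 1) • u := by
      rw [smul_smul, ← pow_succ']
    rw [smul_add, this, ← hu]
    abel

/-- generation with error in c^k M -/
lemma gen_pow
    (hkill : ∀ n, ∀ v : M n, z.c ^ (n + 1) • v = 0)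
    (hsurj : ∀ n, Function.Surjective (φ n))
    (hker : ∀ n, LinearMap.ker (φ n) = z.cPowSMul (M (n + 1)) (n + 1))
    (hx0 : ∀ y : M 0, ∃ a : Fin t → A, ∑ i, a i • ((x i : ∀ k, M k) 0) = y) :
    ∀ (kk m : ℕ) (y : M m), ∃ (a : Fin t → A) (w : M m),
      y = (∑ i, a i • ((x i : ∀ k, M k) m)) + z.c ^ kk • w := by
  intro kk
  induction kk with
  | zero =>
    intro m y
    exact ⟨0, y, by simp⟩
  | succ kk ih =>
    intro m y
    obtain ⟨a, w, hw⟩ := ih m y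
    obtain ⟨b, w', hw'⟩ := gen_one z M φ x hkill hsurj hker hx0 m w
    refine ⟨fun i => a i + z.c ^ kk * b i, w', ?_⟩
    have h1 : z.c ^ kk • w
        = (∑ i, (z.c ^ kk * b i) • ((x i : ∀ k, M k) m)) + z.c ^ (kk + 1) • w' := by
      rw [hw', smul_add, Finset.smul_sum, smul_smul, ← pow_succ]
      congr 1
      refine Finset.sum_congr rfl fun i _ => ?_
      rw [smul_smul]
    rw [hw, h1]
    rw [Finset.sum_congr rfl (fun (i : Fin t) _ =>
      add_smul (a i) (z.c ^ kk * b i) ((x i : ∀ k, M k) m)), Finset.sum_add_distrib]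
    abel

/-- full generation at each level -/
lemma gen
    (hkill : ∀ n, ∀ v : M n, z.c ^ (n + 1) • v = 0)
    (hsurj : ∀ n, Function.Surjective (φ n))
    (hker : ∀ n, LinearMap.ker (φ n) = z.cPowSMul (M (n + 1)) (n + 1))
    (hx0 : ∀ y : M 0, ∃ a : Fin t → A, ∑ i, a i • ((x i : ∀ k, M k) 0) = y) :
    ∀ m (y : M m), ∃ a : Fin t → A, ∑ i, a i • ((x i : ∀ k, M k) m) = y := by
  intro m y
  obtain ⟨a, w, hw⟩ := gen_pow z M φ x hkill hsurj hker hx0 (m + 1) m y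
  rw [hkill m w, add_zero] at hw
  exact ⟨a, hw.symm⟩


/-- one approximation step -/
lemma approx_step
    (hkill : ∀ n, ∀ v : M n, z.c ^ (n + 1) • v = 0)
    (hsurj : ∀ n, Function.Surjective (φ n))
    (hker : ∀ n, LinearMap.ker (φ n) = z.cPowSMul (M (n + 1)) (n + 1))
    (hx0 : ∀ y : M 0, ∃ a : Fin t → A, ∑ i, a i • ((x i : ∀ k, M k) 0) = y)
    (g : ↥(invLimit M φ)) :
    ∀ m (v : Fin t → A), (∑ i, v i • ((x i : ∀ k, M k) m) = (g : ∀ k, M k) m) →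
      ∃ b : Fin t → A,
        ∑ i, (v i + z.c ^ (m + 1) * b i) • ((x i : ∀ k, M k) (m + 1))
          = (g : ∀ k, M k) (m + 1) := by
  intro m v hv
  have hmem : (g : ∀ k, M k) (m + 1) - ∑ i, v i • ((x i : ∀ k, M k) (m + 1)) ∈
      LinearMap.ker (φ m) := by
    rw [LinearMap.mem_ker, map_sub, map_sum, coord_succ M φ g m]
    have : ∀ i ∈ Finset.univ, φ m (v i • ((x i : ∀ k, M k) (m + 1)))
        = v i • ((x i : ∀ k, M k) m) := fun i _ => by rw [map_smul, coord_succ]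
    rw [Finset.sum_congr rfl this, hv, sub_self]
  rw [hker m] at hmem
  obtain ⟨u, hu⟩ := hmem
  obtain ⟨b, hb⟩ := gen z M φ x hkill hsurj hker hx0 (m + 1) u
  refine ⟨b, ?_⟩
  have h1 : ∀ i ∈ Finset.univ, (v i + z.c ^ (m + 1) * b i) • ((x i : ∀ k, M k) (m + 1))
      = v i • ((x i : ∀ k, M k) (m + 1))
        + z.c ^ (m + 1) • (b i • ((x i : ∀ k, M k) (m + 1))) := fun i _ => by
    rw [add_smul, smul_smul]
  rw [Finset.sum_congr rfl h1, Finset.sum_add_distrib, ← Finset.smul_sum, hb, ← hu]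
  abel

/-- the approximating sequence of coefficient vectors -/
noncomputable def approxSeq (g : ↥(invLimit M φ)) (n₀ : ℕ) (a₀ : Fin t → A)
    (h₀ : ∀ m, m ≤ n₀ → ∑ i, a₀ i • ((x i : ∀ k, M k) m) = (g : ∀ k, M k) m)
    (hstep : ∀ m (v : Fin t → A),
      (∑ i, v i • ((x i : ∀ k, M k) m) = (g : ∀ k, M k) m) →
      ∃ b : Fin t → A,
        ∑ i, (v i + z.c ^ (m + 1) * b i) • ((x i : ∀ k, M k) (m + 1))
          = (g : ∀ k, M k) (m + 1)) :
    ∀ m, {v : Fin t → A //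
      (∑ i, v i • ((x i : ∀ k, M k) m) = (g : ∀ k, M k) m) ∧ (m ≤ n₀ → v = a₀)}
  | 0 => ⟨a₀, h₀ 0 (Nat.zero_le _), fun _ => rfl⟩
  | (m + 1) =>
    if h : m + 1 ≤ n₀ then ⟨a₀, h₀ _ h, fun _ => rfl⟩
    else
      let p := approxSeq g n₀ a₀ h₀ hstep m
      ⟨fun i => p.1 i + z.c ^ (m + 1) * (hstep m p.1 p.2.1).choose i,
       (hstep m p.1 p.2.1).choose_spec, fun h' => absurd h' h⟩

lemma approxSeq_diff (g : ↥(invLimit M φ)) (n₀ : ℕ) (a₀ : Fin t → A)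
    (h₀ : ∀ m, m ≤ n₀ → ∑ i, a₀ i • ((x i : ∀ k, M k) m) = (g : ∀ k, M k) m)
    (hstep : ∀ m (v : Fin t → A),
      (∑ i, v i • ((x i : ∀ k, M k) m) = (g : ∀ k, M k) m) →
      ∃ b : Fin t → A,
        ∑ i, (v i + z.c ^ (m + 1) * b i) • ((x i : ∀ k, M k) (m + 1))
          = (g : ∀ k, M k) (m + 1)) (m : ℕ) :
    ∃ b : Fin t → A, ∀ i,
      (approxSeq z M φ x g n₀ a₀ h₀ hstep (m + 1)).1 i
        = (approxSeq z M φ x g n₀ a₀ h₀ hstep m).1 i + z.c ^ (m + 1) * b i := by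
  by_cases h : m + 1 ≤ n₀
  · refine ⟨0, fun i => ?_⟩
    have h1 : (approxSeq z M φ x g n₀ a₀ h₀ hstep (m + 1)).1 = a₀ :=
      (approxSeq z M φ x g n₀ a₀ h₀ hstep (m + 1)).2.2 h
    have h2 : (approxSeq z M φ x g n₀ a₀ h₀ hstep m).1 = a₀ :=
      (approxSeq z M φ x g n₀ a₀ h₀ hstep m).2.2 (Nat.le_of_succ_le h)
    rw [h1, h2, Pi.zero_apply, mul_zero, add_zero]
  · refine ⟨(hstep m (approxSeq z M φ x g n₀ a₀ h₀ hstep m).1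
      (approxSeq z M φ x g n₀ a₀ h₀ hstep m).2.1).choose, fun i => ?_⟩
    conv_lhs => rw [approxSeq, dif_neg h]


lemma coord_sum (a : Fin t → A) (m : ℕ) :
    ((∑ i, a i • x i : ↥(invLimit M φ)) : ∀ k, M k) m
      = ∑ i, a i • ((x i : ∀ k, M k) m) := by
  rw [Submodule.coe_sum, Finset.sum_apply]
  rfl

/-- downward vanishing -/
lemma zero_down (g : ↥(invLimit M φ)) (n : ℕ) (hg : (g : ∀ k, M k) n = 0) :
    ∀ m, m ≤ n → (g : ∀ k, M k) m = 0 := by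
  have key : ∀ kk m, m + kk = n → (g : ∀ k, M k) m = 0 := by
    intro kk
    induction kk with
    | zero => intro m hm; rw [Nat.add_zero] at hm; subst hm; exact hg
    | succ kk ih =>
      intro m hm
      have h1 : (g : ∀ k, M k) (m + 1) = 0 := ih (m + 1) (by omega)
      rw [← coord_succ M φ g m, h1, map_zero]
  intro m hm
  exact key (n - m) m (by omega)

/-- the main approximation lemma -/
lemma main_approx
    (hcomplete : Function.Surjective z.toAdicLim)
    (hkill : ∀ n, ∀ v : M n, z.c ^ (n + 1) • v = 0)
    (hsurj : ∀ n, Function.Surjective (φ n))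
    (hker : ∀ n, LinearMap.ker (φ n) = z.cPowSMul (M (n + 1)) (n + 1))
    (hx0 : ∀ y : M 0, ∃ a : Fin t → A, ∑ i, a i • ((x i : ∀ k, M k) 0) = y)
    (g : ↥(invLimit M φ)) (n₀ : ℕ) (a₀ : Fin t → A)
    (h₀ : ∀ m, m ≤ n₀ → ∑ i, a₀ i • ((x i : ∀ k, M k) m) = (g : ∀ k, M k) m) :
    ∃ α : Fin t → A, (∑ i, α i • x i = g) ∧
      ∀ i, ∃ r, α i = a₀ i + z.c ^ (n₀ + 1) * r := by
  classical
  set hstep := approx_step z M φ x hkill hsurj hker hx0 g with hstep_def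
  set s := approxSeq z M φ x g n₀ a₀ h₀ hstep with s_def
  have hdiff : ∀ m, ∃ b : Fin t → A, ∀ i,
      (s (m + 1)).1 i = (s m).1 i + z.c ^ (m + 1) * b i :=
    approxSeq_diff z M φ x g n₀ a₀ h₀ hstep
  -- build the compatible sequence in AdicLim for each coordinate i
  have hF : ∀ i : Fin t, ∃ α : A, ∀ k, z.adicCon k (α) ((s k).1 i) := by
    intro i
    have compat : ∀ n, z.adicTransition n ((z.adicCon (n + 1)).mk' ((s (n + 1)).1 i))
        = (z.adicCon n).mk' ((s n).1 i) := by
      intro n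
      show Quotient.map' id _ (Quotient.mk'' ((s (n + 1)).1 i))
          = Quotient.mk'' ((s n).1 i)
      rw [Quotient.map'_mk'']
      show (((s (n + 1)).1 i : A) : (z.adicCon n).Quotient) = ((s n).1 i : A)
      rw [RingCon.eq]
      obtain ⟨b, hb⟩ := hdiff n
      exact ⟨z.c * b i, by rw [hb i, pow_succ, mul_assoc]; abel⟩
    obtain ⟨α, hα⟩ := hcomplete ⟨fun k => (z.adicCon k).mk' ((s k).1 i), compat⟩
    refine ⟨α, fun k => ?_⟩
    have : (z.adicCon k).mk' α = (z.adicCon k).mk' ((s k).1 i) :=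
      congrFun (congrArg Subtype.val hα) k
    exact (RingCon.eq (z.adicCon k)).mp this
  choose α hα using hF
  have key : ∀ m i, ∃ r, α i = (s m).1 i + z.c ^ (m + 1) * r := by
    intro m i
    obtain ⟨r, hr⟩ := hα i (m + 1)
    obtain ⟨b, hb⟩ := hdiff m
    refine ⟨r + b i, ?_⟩
    rw [mul_add, ← hr, hb i]
    abel
  refine ⟨α, ?_, ?_⟩
  · apply Subtype.ext
    funext m
    have coord : ((∑ i, α i • x i : ↥(invLimit M φ)) : ∀ k, M k) m
        = ∑ i, α i • ((x i : ∀ k, M k) m) := by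
      rw [Submodule.coe_sum]
      rw [Finset.sum_apply]
      rfl
    rw [coord]
    choose r hr using key m
    have h1 : ∀ i ∈ Finset.univ, α i • ((x i : ∀ k, M k) m)
        = (s m).1 i • ((x i : ∀ k, M k) m)
          + z.c ^ (m + 1) • (r i • ((x i : ∀ k, M k) m)) := fun i _ => by
      rw [hr i, add_smul, smul_smul]
    rw [Finset.sum_congr rfl h1, Finset.sum_add_distrib, ← Finset.smul_sum,
      hkill m, add_zero, (s m).2.1]
  · intro i
    obtain ⟨r, hr⟩ := key n₀ i
    refine ⟨r, ?_⟩
    rw [hr, (s n₀).2.2 (le_refl n₀)]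

end InvLimAux


end AuxLemmas

/-- let `A` be a unital ring and `c ∈ A` a central element such that `A` is
`c`-adically complete (the canonical ring homomorphism `A → lim_n A/cⁿA` is bijective)
and such that the associated graded ring `gr(A) = ⨁ₙ cⁿA/cⁿ⁺¹A` is left noetherian.
Suppose given for each `n ≥ 1` a left `A`-module `Mₙ` killed by `cⁿ` and `A`-linear maps
`φₙ : Mₙ₊₁ → Mₙ` inducing isomorphisms `Mₙ₊₁/cⁿMₙ₊₁ ≅ Mₙ` (that is: `φₙ` is surjective
with kernel `cⁿMₙ₊₁`), with `M₁` finitely generated over `A/cA`.  Then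
`M := lim_n Mₙ` is a finitely generated left `A`-module and for every `n ≥ 1` the
canonical map `M/cⁿM → Mₙ` is an isomorphism.
(Here the family is reindexed so that `M n` denotes `Mₙ₊₁` for `n : ℕ`; note that a
module killed by `c` is finitely generated over `A/cA` iff it is finitely generated over
`A`.) -/
theorem invLimit_finite_and_quotients
    (z : CentralElement A)
    (hcomplete : Function.Bijective z.toAdicLim)
    (hnoeth : IsNoetherianRing z.CAdicGraded)
    (M : ℕ → Type) [∀ n, AddCommGroup (M n)] [∀ n, Module A (M n)]
    (hkill : ∀ n, ∀ x : M n, z.c ^ (n + 1) • x = 0)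
    (φ : ∀ n, M (n + 1) →ₗ[A] M n)
    (hsurj : ∀ n, Function.Surjective (φ n))
    (hker : ∀ n, LinearMap.ker (φ n) = z.cPowSMul (M (n + 1)) (n + 1))
    (hfin : Module.Finite A (M 0)) :
    Module.Finite A ↥(invLimit M φ) ∧
      ∀ n, Function.Bijective (limLift M z φ hkill n) := by
  classical
  obtain ⟨t, v, hv⟩ := Module.Finite.exists_fin (R := A) (M := M 0)
  choose xg hxg using fun i => InvLimAux.proj_zero_surj M φ hsurj (v i)
  have hx0 : ∀ y : M 0, ∃ a : Fin t → A, ∑ i, a i • ((xg i : ∀ k, M k) 0) = y := by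
    intro y
    have hy : y ∈ Submodule.span A (Set.range v) := hv ▸ Submodule.mem_top
    obtain ⟨a, ha⟩ := (Submodule.mem_span_range_iff_exists_fun A).mp hy
    exact ⟨a, by simpa [hxg] using ha⟩
  have hgen := InvLimAux.gen z M φ xg hkill hsurj hker hx0
  have hmain := InvLimAux.main_approx z M φ xg hcomplete.2 hkill hsurj hker hx0
  constructor
  · -- `invLimit M φ` is a finite module
    let L : (Fin t → A) →ₗ[A] ↥(invLimit M φ) :=
      { toFun := fun a => ∑ i, a i • xg i
        map_add' := fun a b => by
          simp only [Pi.add_apply, add_smul, Finset.sum_add_distrib]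
        map_smul' := fun r a => by
          simp only [Pi.smul_apply, smul_eq_mul, RingHom.id_apply, Finset.smul_sum,
            smul_smul] }
    have hLsurj : Function.Surjective L := by
      intro g
      obtain ⟨a₀, ha₀⟩ := hx0 ((g : ∀ k, M k) 0)
      obtain ⟨α, hsum, -⟩ := hmain g 0 a₀ (fun m hm => by
        obtain rfl := Nat.le_zero.mp hm
        exact ha₀)
      exact ⟨α, hsum⟩
    exact Module.Finite.of_surjective L hLsurj
  · intro n
    constructor
    · -- injectivity
      have hle : LinearMap.ker (limProj M φ n) ≤
          z.cPowSMul (↥(invLimit M φ)) (n + 1) := by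
        intro g hg
        have hgn : (g : ∀ k, M k) n = 0 := hg
        have hzero := InvLimAux.zero_down M φ g n hgn
        obtain ⟨α, hsum, hcoef⟩ := hmain g n (0 : Fin t → A) (fun m hm => by
          rw [hzero m hm]
          simp)
        choose r hr using hcoef
        refine ⟨∑ i, r i • xg i, ?_⟩
        rw [← hsum, Finset.smul_sum]
        refine Finset.sum_congr rfl fun i _ => ?_
        rw [hr i, Pi.zero_apply, zero_add, smul_smul]
      have hker0 : LinearMap.ker (limLift M z φ hkill n) = ⊥ :=
        Submodule.ker_liftQ_eq_bot _ _ _ hle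
      exact LinearMap.ker_eq_bot.mp hker0
    · -- surjectivity
      intro y
      obtain ⟨a, ha⟩ := hgen n y
      refine ⟨Submodule.Quotient.mk (∑ i, a i • xg i), ?_⟩
      rw [limLift, Submodule.liftQ_apply]
      show ((∑ i, a i • xg i : ↥(invLimit M φ)) : ∀ k, M k) n = y
      rw [InvLimAux.coord_sum M φ xg a n, ha]


end
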